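/- arXiv:1704.07475 — 2 statements merged into one kernel-verified Lean document; each statement's English description precedes it below -/
import Mathlib

section
/- Let g, V, θ be real numbers with |V - g| ≤ u for some u ≥ 0. Suppose a robot at θ moves toward g, reaching a new position θ' that lies on the segment between θ and g with |θ' - g| ≥ u. Then |θ' - V| ≤ |θ - V|, provided |θ - g| ≥ u. -/
/-!
The new position `θ'` lies between `θ` and `g`, and `|V - g| ≤ u ≤ |θ' - g|`, so `V` lies beyond
`θ'` as seen from `θ`. Hence `θ'` lies between `θ` and `V`, and a point of a segment is no farther
from one endpoint than the other endpoint is.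
-/

open Set
open scoped Interval

theorem add_mul_sign_sub_mem_uIcc {θ g s : ℝ} (hs0 : 0 ≤ s) (hs1 : s ≤ |θ - g|) :
    θ + s * Real.sign (g - θ) ∈ [[θ, g]] := by
  rcases lt_trichotomy θ g with h | rfl | h
  · rw [Real.sign_of_pos (sub_pos.2 h), mul_one]
    rw [abs_of_neg (sub_neg.2 h)] at hs1
    exact mem_uIcc.2 (Or.inl ⟨by linarith, by linarith⟩)
  · simp
  · rw [Real.sign_of_neg (sub_neg.2 h), mul_neg_one]
    rw [abs_of_pos (sub_pos.2 h)] at hs1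
    exact mem_uIcc.2 (Or.inr ⟨by linarith, by linarith⟩)

theorem mem_uIcc_of_abs_sub_le {a b c d : ℝ} (hc : c ∈ [[a, b]]) (hd : |d - b| ≤ |c - b|) :
    c ∈ [[a, d]] := by
  rw [abs_le] at hd
  rcases mem_uIcc.1 hc with ⟨hac, hcb⟩ | ⟨hbc, hca⟩
  · rw [abs_of_nonpos (sub_nonpos.2 hcb)] at hd
    exact mem_uIcc.2 (Or.inl ⟨hac, by linarith⟩)
  · rw [abs_of_nonneg (sub_nonneg.2 hbc)] at hd
    exact mem_uIcc.2 (Or.inr ⟨by linarith, hca⟩)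

theorem stmt1_general (g V θ u s : ℝ) (hV : |V - g| ≤ u)
    (hs0 : 0 ≤ s) (hs1 : s ≤ |θ - g|)
    (θ' : ℝ) (hθ' : θ' = θ + s * Real.sign (g - θ))
    (hfar : u ≤ |θ' - g|) :
    |θ' - V| ≤ |θ - V| := by
  have htoward : θ' ∈ [[θ, g]] := hθ' ▸ add_mul_sign_sub_mem_uIcc hs0 hs1
  have hbetween : θ' ∈ [[θ, V]] := mem_uIcc_of_abs_sub_le htoward (hV.trans hfar)
  simpa only [abs_sub_comm] using abs_sub_right_of_mem_uIcc hbetween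

theorem stmt1 (g V θ u s : ℝ) (hu : 0 ≤ u) (hV : |V - g| ≤ u)
    (hθ : u ≤ |θ - g|) (hs0 : 0 ≤ s) (hs1 : s ≤ |θ - g|)
    (θ' : ℝ) (hθ' : θ' = θ + s * Real.sign (g - θ))
    (hfar : u ≤ |θ' - g|) :
    |θ' - V| ≤ |θ - V| :=
  stmt1_general g V θ u s hV hs0 hs1 θ' hθ' hfar
end

section
/- Combining the control law step with the monotonicity lemma: under the hypotheses |V − g| ≤ u and the control law above producing θ' with |θ' − g| ≥ u and θ' between θ and g, the distance to the true Voronoi midpoint does not increase: |θ' − V| ≤ |θ − V|. -/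
/-! The control law never overshoots: `0 ≤ ω Δt ≤ |g - θ|`, so `θ'` lies between `θ` and `g`.
Being at distance at least `u ≥ |V - g|` from `g`, it then also lies between `θ` and `V`. -/

open Set

/-- The rate `ω` of Equation 10, with `d = |g - θ|`. -/
noncomputable def controlRate (ωmax Δt u d : ℝ) : ℝ :=
  if ωmax * Δt + u ≤ d then ωmax else if d ≤ u then 0 else (d - u) / Δt

lemma controlRate_nonneg {ωmax Δt u d : ℝ} (hωmax : 0 ≤ ωmax) (hΔt : 0 ≤ Δt) :
    0 ≤ controlRate ωmax Δt u d := by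
  unfold controlRate
  split_ifs with hfar hnear
  · exact hωmax
  · exact le_rfl
  · exact div_nonneg (by linarith) hΔt

lemma controlRate_mul_le {ωmax Δt u d : ℝ} (hΔt : 0 < Δt) :
    controlRate ωmax Δt u d * Δt ≤ max (d - u) 0 := by
  unfold controlRate
  split_ifs with hfar hnear
  · exact le_max_of_le_left (by linarith)
  · simp
  · rw [div_mul_cancel₀ _ hΔt.ne']
    exact le_max_left _ _

lemma add_mul_sign_mem_uIcc {θ g s : ℝ} (hs₀ : 0 ≤ s) (hs : s ≤ |g - θ|) :
    θ + s * Real.sign (g - θ) ∈ uIcc θ g := by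
  rcases lt_trichotomy θ g with hlt | rfl | hgt
  · rw [Real.sign_of_pos (sub_pos.mpr hlt), abs_of_pos (sub_pos.mpr hlt)] at *
    exact mem_uIcc.mpr (Or.inl ⟨by linarith, by linarith⟩)
  · simp
  · rw [Real.sign_of_neg (sub_neg.mpr hgt), abs_of_neg (sub_neg.mpr hgt)] at *
    exact mem_uIcc.mpr (Or.inr ⟨by linarith, by linarith⟩)

lemma abs_sub_le_of_mem_uIcc {θ θ' g V : ℝ} (hθ' : θ' ∈ uIcc θ g) (hV : |V - g| ≤ |θ' - g|) :
    |θ' - V| ≤ |θ - V| := by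
  rcases mem_uIcc.mp hθ' with ⟨h₁, h₂⟩ | ⟨h₁, h₂⟩
  · rw [abs_of_nonpos (by linarith : θ' - g ≤ 0)] at hV
    have hV' := (abs_le.mp hV).1
    rw [abs_of_nonpos (by linarith), abs_of_nonpos (by linarith)]
    linarith
  · rw [abs_of_nonneg (by linarith : 0 ≤ θ' - g)] at hV
    have hV' := (abs_le.mp hV).2
    rw [abs_of_nonneg (by linarith), abs_of_nonneg (by linarith)]
    linarith

theorem stmt16_general (θ g V u Δt ωmax : ℝ) (hu : 0 ≤ u) (hΔt : 0 < Δt)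
    (hω : 0 < ωmax) (hV : |V - g| ≤ u)
    (ω : ℝ)
    (hωdef : ω = if ωmax * Δt + u ≤ |g - θ| then ωmax
      else if |g - θ| ≤ u then 0 else (|g - θ| - u) / Δt)
    (θ' : ℝ) (hθ' : θ' = θ + ω * Δt * Real.sign (g - θ))
    (hfar : u ≤ |θ' - g|) :
    |θ' - V| ≤ |θ - V| := by
  change ω = controlRate ωmax Δt u |g - θ| at hωdef
  have hstep₀ : 0 ≤ ω * Δt :=
    mul_nonneg (hωdef ▸ controlRate_nonneg hω.le hΔt.le) hΔt.le
  have hstep : ω * Δt ≤ |g - θ| :=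
    (hωdef ▸ controlRate_mul_le hΔt).trans (max_le (by linarith) (abs_nonneg _))
  have hbetween : θ' ∈ uIcc θ g := hθ' ▸ add_mul_sign_mem_uIcc hstep₀ hstep
  exact abs_sub_le_of_mem_uIcc hbetween (hV.trans hfar)

theorem stmt16 (θ g V u Δt ωmax : ℝ) (hu : 0 ≤ u) (hΔt : 0 < Δt)
    (hω : 0 < ωmax) (hV : |V - g| ≤ u)
    (ω : ℝ)
    (hωdef : ω = if ωmax * Δt + u ≤ |g - θ| then ωmax
      else if |g - θ| ≤ u then 0 else (|g - θ| - u) / Δt)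
    (θ' : ℝ) (hθ' : θ' = θ + ω * Δt * Real.sign (g - θ))
    (hfar : u ≤ |θ' - g|) (hmono : |θ' - g| ≤ |θ - g|) :
    |θ' - V| ≤ |θ - V| :=
  stmt16_general θ g V u Δt ωmax hu hΔt hω hV ω hωdef θ' hθ' hfar
end
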